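/- arXiv:2301.01339 — 4 statements merged into one kernel-verified Lean document; each statement's English description precedes it below -/
import Mathlib

section
/- Let n ≥ 1, M > 0, η > 0, x ∈ ℝⁿ with ‖x‖₂ ≤ M, and W ∈ ℝ^{n×n}. Then ‖W + η G(xxᵀ, W)‖_F² ≤ (1 + 2M²η)‖W‖_F² + η² ( M⁴‖W‖_F² + (n+3) M⁴ ‖W‖_F⁶ ). -/
open Matrix

/-- `Σ(Λ,Q)`: entrywise, `(QᵀΛQ)_{jk}` for `j > k`, `−(QᵀΛQ)_{jk}` for `j < k`, `0` on the
diagonal. -/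
noncomputable def sigmaMat {n : ℕ} (Λ Q : Matrix (Fin n) (Fin n) ℝ) :
    Matrix (Fin n) (Fin n) ℝ :=
  Matrix.of fun j k =>
    if (k : ℕ) < (j : ℕ) then (Qᵀ * Λ * Q) j k
    else if (j : ℕ) < (k : ℕ) then -((Qᵀ * Λ * Q) j k)
    else 0

/-- Frobenius norm of a matrix. -/
noncomputable def frobNorm {n : ℕ} (A : Matrix (Fin n) (Fin n) ℝ) : ℝ :=
  Real.sqrt (∑ i, ∑ j, (A i j) ^ 2)

/-- Euclidean (`ℓ²`) norm on `ℝⁿ`. -/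
noncomputable def euclNorm {n : ℕ} (x : Fin n → ℝ) : ℝ :=
  Real.sqrt (∑ i, (x i) ^ 2)

/-- The rank-one matrix `xxᵀ`. -/
def outer {n : ℕ} (x : Fin n → ℝ) : Matrix (Fin n) (Fin n) ℝ :=
  Matrix.of fun i j => x i * x j

/-- `G(Λ,Q) := ΛQ − QQᵀΛQ + QΣ(Λ,Q)`. -/
noncomputable def Gmat {n : ℕ} (Λ Q : Matrix (Fin n) (Fin n) ℝ) :
    Matrix (Fin n) (Fin n) ℝ :=
  Λ * Q - Q * Qᵀ * Λ * Q + Q * sigmaMat Λ Q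

/-!
Put `v = Wᵀx` and `D = Σ(xxᵀ, W) - WᵀxxᵀW = Σ(xxᵀ, W) - vvᵀ`, so that `G(xxᵀ, W) = xvᵀ + WD`.
Since `Σ` is skew-symmetric, `D + Dᵀ = -2vvᵀ`, hence `tr(CD) = -vᵀCv ≤ 0` for every positive
semidefinite `C`. With `C = WᵀW` and `C = vvᵀ` this disposes of the terms involving `D` in
`⟨W, G⟩_F` and of the cross term in `‖G‖_F²`, leaving `⟨W, G⟩_F ≤ ‖v‖² ≤ ‖x‖²‖W‖_F²`. Finally
`Σ ⟂ vvᵀ` in the Frobenius inner product and `|Σ_jk| ≤ |(vvᵀ)_jk|`, so `‖D‖_F² ≤ 2‖v‖⁴` and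
`‖WD‖_F² ≤ 2‖W‖_F²‖v‖⁴`.
-/

namespace Matrix

variable {m n : Type*} [Fintype n]

lemma trace_transpose_mul_comm [Fintype m] (A B : Matrix m n ℝ) :
    (Aᵀ * B).trace = (Bᵀ * A).trace := by
  rw [← trace_transpose, transpose_mul, transpose_transpose]

lemma IsSymm.transpose_mul_mul {Λ : Matrix n n ℝ} (hΛ : Λ.IsSymm) (Q : Matrix n m ℝ) :
    (Qᵀ * Λ * Q).IsSymm := by
  simp [IsSymm, Matrix.mul_assoc, hΛ.eq]

lemma posSemidef_transpose_mul_self [Fintype m] (A : Matrix m n ℝ) : (Aᵀ * A).PosSemidef := by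
  simpa using posSemidef_conjTranspose_mul_self A

lemma IsSymm.two_mul_trace_mul {C : Matrix n n ℝ} (hC : C.IsSymm) (D : Matrix n n ℝ) :
    2 * (C * D).trace = (C * (D + Dᵀ)).trace := by
  rw [mul_add, trace_add, ← trace_transpose (C * Dᵀ), transpose_mul, transpose_transpose, hC.eq,
    trace_mul_comm D C]
  ring

lemma trace_transpose_mul_eq_zero_of_isSymm {A S : Matrix n n ℝ} (hA : Aᵀ = -A)
    (hS : S.IsSymm) : (Aᵀ * S).trace = 0 := by
  have h := trace_transpose_mul_comm A S
  rw [hS.eq, hA, neg_mul, trace_neg, trace_mul_comm] at h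
  rw [hA, neg_mul, trace_neg, trace_mul_comm]
  linarith

lemma PosSemidef.trace_mul_nonpos {C D : Matrix n n ℝ} {u : n → ℝ} (hC : C.PosSemidef)
    (hD : D + Dᵀ = -(2 : ℝ) • vecMulVec u u) : (C * D).trace ≤ 0 := by
  have hCu : 0 ≤ u ⬝ᵥ C *ᵥ u := by simpa using hC.dotProduct_mulVec_nonneg u
  have hsymm : C.IsSymm := isHermitian_iff_isSymm.mp hC.isHermitian
  have h := hsymm.two_mul_trace_mul D
  rw [hD, Matrix.mul_smul, trace_smul, mul_vecMulVec, trace_vecMulVec, dotProduct_comm] at h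
  simp only [smul_eq_mul] at h
  linarith

end Matrix

section Frobenius

variable {n : ℕ}

lemma frobNorm_sq_eq_sum (A : Matrix (Fin n) (Fin n) ℝ) : frobNorm A ^ 2 = ∑ i, ∑ j, A i j ^ 2 :=
  Real.sq_sqrt (by positivity)

lemma frobNorm_sq_eq_trace (A : Matrix (Fin n) (Fin n) ℝ) : frobNorm A ^ 2 = (Aᵀ * A).trace := by
  rw [frobNorm_sq_eq_sum, Finset.sum_comm]
  simp [trace, mul_apply, sq]

lemma frobNorm_nonneg (A : Matrix (Fin n) (Fin n) ℝ) : 0 ≤ frobNorm A := Real.sqrt_nonneg _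

lemma frobNorm_add_sq (A B : Matrix (Fin n) (Fin n) ℝ) :
    frobNorm (A + B) ^ 2 = frobNorm A ^ 2 + 2 * (Aᵀ * B).trace + frobNorm B ^ 2 := by
  simp only [frobNorm_sq_eq_trace, transpose_add, add_mul, mul_add, trace_add,
    trace_transpose_mul_comm B A]
  ring

lemma frobNorm_smul_sq (c : ℝ) (A : Matrix (Fin n) (Fin n) ℝ) :
    frobNorm (c • A) ^ 2 = c ^ 2 * frobNorm A ^ 2 := by
  simp only [frobNorm_sq_eq_trace, transpose_smul, Matrix.smul_mul, Matrix.mul_smul, trace_smul,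
    smul_eq_mul]
  ring

lemma frobNorm_vecMulVec_sq (x y : Fin n → ℝ) :
    frobNorm (vecMulVec x y) ^ 2 = (x ⬝ᵥ x) * (y ⬝ᵥ y) := by
  rw [frobNorm_sq_eq_trace, transpose_vecMulVec, vecMulVec_mul_vecMulVec, trace_vecMulVec,
    dotProduct_smul, smul_eq_mul]

lemma frobNorm_mul_le (A B : Matrix (Fin n) (Fin n) ℝ) :
    frobNorm (A * B) ≤ frobNorm A * frobNorm B := by
  let _ := Matrix.frobeniusNormedAddCommGroup (m := Fin n) (n := Fin n) (α := ℝ)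
  have h : ∀ C : Matrix (Fin n) (Fin n) ℝ, frobNorm C = ‖C‖ := fun C => by
    rw [frobenius_norm_def, frobNorm, Real.sqrt_eq_rpow]
    simp [Real.norm_eq_abs, sq_abs]
  rw [h, h, h]
  exact frobenius_norm_mul A B

lemma vecMul_dotProduct_self_le (x : Fin n → ℝ) (W : Matrix (Fin n) (Fin n) ℝ) :
    (x ᵥ* W) ⬝ᵥ (x ᵥ* W) ≤ (x ⬝ᵥ x) * frobNorm W ^ 2 := by
  rw [frobNorm_sq_eq_sum, Finset.sum_comm, Finset.mul_sum]
  refine Finset.sum_le_sum fun j _ => ?_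
  simpa [vecMul, dotProduct, sq] using Finset.sum_mul_sq_le_sq_mul_sq Finset.univ x (fun i => W i j)

lemma euclNorm_sq (x : Fin n → ℝ) : euclNorm x ^ 2 = x ⬝ᵥ x := by
  rw [euclNorm, Real.sq_sqrt (by positivity)]
  simp [dotProduct, sq]

end Frobenius

section sigmaMat

variable {n : ℕ} {Λ : Matrix (Fin n) (Fin n) ℝ}

lemma transpose_sigmaMat (hΛ : Λ.IsSymm) (Q : Matrix (Fin n) (Fin n) ℝ) :
    (sigmaMat Λ Q)ᵀ = -sigmaMat Λ Q := by
  have hS := (hΛ.transpose_mul_mul Q).apply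
  ext j k
  simp only [transpose_apply, sigmaMat, of_apply, Fin.val_fin_lt]
  rcases lt_trichotomy j k with h | rfl | h
  · simp [h, h.not_gt, hS]
  · simp
  · simp [h, h.not_gt, hS]

lemma frobNorm_sigmaMat_sq_le (Λ Q : Matrix (Fin n) (Fin n) ℝ) :
    frobNorm (sigmaMat Λ Q) ^ 2 ≤ frobNorm (Qᵀ * Λ * Q) ^ 2 := by
  simp only [frobNorm_sq_eq_sum]
  refine Finset.sum_le_sum fun j _ => Finset.sum_le_sum fun k _ => ?_
  simp only [sigmaMat, of_apply]
  split_ifs <;> simp [sq_nonneg]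

lemma Gmat_eq (Λ Q : Matrix (Fin n) (Fin n) ℝ) :
    Gmat Λ Q = Λ * Q + Q * (sigmaMat Λ Q - Qᵀ * Λ * Q) := by
  rw [Gmat, Matrix.mul_sub]
  simp only [Matrix.mul_assoc]
  abel

lemma sigmaMat_sub_add_transpose (hΛ : Λ.IsSymm) (Q : Matrix (Fin n) (Fin n) ℝ) :
    (sigmaMat Λ Q - Qᵀ * Λ * Q) + (sigmaMat Λ Q - Qᵀ * Λ * Q)ᵀ = -(2 : ℝ) • (Qᵀ * Λ * Q) := by
  rw [transpose_sub, transpose_sigmaMat hΛ, (hΛ.transpose_mul_mul Q).eq]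
  module

lemma frobNorm_sigmaMat_sub_sq_le (hΛ : Λ.IsSymm) (Q : Matrix (Fin n) (Fin n) ℝ) :
    frobNorm (sigmaMat Λ Q - Qᵀ * Λ * Q) ^ 2 ≤ 2 * frobNorm (Qᵀ * Λ * Q) ^ 2 := by
  rw [sub_eq_add_neg, ← neg_one_smul ℝ (Qᵀ * Λ * Q), frobNorm_add_sq, frobNorm_smul_sq,
    Matrix.mul_smul, trace_smul,
    trace_transpose_mul_eq_zero_of_isSymm (transpose_sigmaMat hΛ Q) (hΛ.transpose_mul_mul Q)]
  have := frobNorm_sigmaMat_sq_le Λ Q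
  simp only [smul_zero, mul_zero, add_zero, neg_one_sq, one_mul]
  linarith

end sigmaMat

section outer

variable {n : ℕ}

lemma outer_eq_vecMulVec (x : Fin n → ℝ) : outer x = vecMulVec x x := rfl

lemma isSymm_outer (x : Fin n → ℝ) : (outer x).IsSymm := transpose_vecMulVec x x

lemma transpose_mul_outer_mul (x : Fin n → ℝ) (W : Matrix (Fin n) (Fin n) ℝ) :
    Wᵀ * outer x * W = vecMulVec (x ᵥ* W) (x ᵥ* W) := by
  rw [outer_eq_vecMulVec, mul_vecMulVec, vecMulVec_mul, mulVec_transpose]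

lemma Gmat_outer_eq (x : Fin n → ℝ) (W : Matrix (Fin n) (Fin n) ℝ) :
    Gmat (outer x) W =
      vecMulVec x (x ᵥ* W) + W * (sigmaMat (outer x) W - Wᵀ * outer x * W) := by
  rw [Gmat_eq, outer_eq_vecMulVec, vecMulVec_mul]

lemma sigmaMat_outer_sub_add_transpose (x : Fin n → ℝ) (W : Matrix (Fin n) (Fin n) ℝ) :
    (sigmaMat (outer x) W - Wᵀ * outer x * W) + (sigmaMat (outer x) W - Wᵀ * outer x * W)ᵀ =
      -(2 : ℝ) • vecMulVec (x ᵥ* W) (x ᵥ* W) := by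
  rw [sigmaMat_sub_add_transpose (isSymm_outer x), transpose_mul_outer_mul]

lemma trace_transpose_mul_Gmat_outer_le (x : Fin n → ℝ) (W : Matrix (Fin n) (Fin n) ℝ) :
    (Wᵀ * Gmat (outer x) W).trace ≤ (x ⬝ᵥ x) * frobNorm W ^ 2 := by
  have hWD : (Wᵀ * W * (sigmaMat (outer x) W - Wᵀ * outer x * W)).trace ≤ 0 :=
    (posSemidef_transpose_mul_self W).trace_mul_nonpos (sigmaMat_outer_sub_add_transpose x W)
  rw [Gmat_outer_eq, Matrix.mul_add, trace_add, ← Matrix.mul_assoc, mul_vecMulVec,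
    trace_vecMulVec, mulVec_transpose]
  linarith [vecMul_dotProduct_self_le x W]

lemma frobNorm_Gmat_outer_sq_le (x : Fin n → ℝ) (W : Matrix (Fin n) (Fin n) ℝ) :
    frobNorm (Gmat (outer x) W) ^ 2 ≤ (x ⬝ᵥ x) ^ 2 * (frobNorm W ^ 2 + 2 * frobNorm W ^ 6) := by
  set v := x ᵥ* W
  set D := sigmaMat (outer x) W - Wᵀ * outer x * W
  have hcross : ((vecMulVec x v)ᵀ * (W * D)).trace ≤ 0 := by
    rw [transpose_vecMulVec, ← Matrix.mul_assoc, vecMulVec_mul]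
    exact (posSemidef_vecMulVec_self_star v).trace_mul_nonpos
      (sigmaMat_outer_sub_add_transpose x W)
  have hD : frobNorm D ^ 2 ≤ 2 * (v ⬝ᵥ v) ^ 2 := by
    rw [sq (v ⬝ᵥ v), ← frobNorm_vecMulVec_sq, ← transpose_mul_outer_mul]
    exact frobNorm_sigmaMat_sub_sq_le (isSymm_outer x) W
  have hWD : frobNorm (W * D) ^ 2 ≤ frobNorm W ^ 2 * frobNorm D ^ 2 := by
    rw [← mul_pow]
    exact pow_le_pow_left₀ (frobNorm_nonneg _) (frobNorm_mul_le W D) 2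
  have hv : v ⬝ᵥ v ≤ (x ⬝ᵥ x) * frobNorm W ^ 2 := vecMul_dotProduct_self_le x W
  have hx0 : 0 ≤ x ⬝ᵥ x := dotProduct_self_star_nonneg x
  have hv0 : 0 ≤ v ⬝ᵥ v := dotProduct_self_star_nonneg v
  rw [Gmat_outer_eq, frobNorm_add_sq, frobNorm_vecMulVec_sq]
  calc (x ⬝ᵥ x) * (v ⬝ᵥ v) + 2 * ((vecMulVec x v)ᵀ * (W * D)).trace + frobNorm (W * D) ^ 2
      ≤ (x ⬝ᵥ x) * (v ⬝ᵥ v) + frobNorm W ^ 2 * (2 * (v ⬝ᵥ v) ^ 2) := by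
        linarith [mul_le_mul_of_nonneg_left hD (sq_nonneg (frobNorm W))]
    _ ≤ (x ⬝ᵥ x) * ((x ⬝ᵥ x) * frobNorm W ^ 2)
          + frobNorm W ^ 2 * (2 * ((x ⬝ᵥ x) * frobNorm W ^ 2) ^ 2) := by gcongr
    _ = (x ⬝ᵥ x) ^ 2 * (frobNorm W ^ 2 + 2 * frobNorm W ^ 6) := by ring

end outer

theorem frobNorm_sq_step_le_general {n : ℕ} (M η : ℝ) (hη : 0 < η)
    (x : Fin n → ℝ) (hx : euclNorm x ≤ M) (W : Matrix (Fin n) (Fin n) ℝ) :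
    frobNorm (W + η • Gmat (outer x) W) ^ 2 ≤
      (1 + 2 * M ^ 2 * η) * frobNorm W ^ 2 +
        η ^ 2 * (M ^ 4 * frobNorm W ^ 2 + ((n : ℝ) + 3) * M ^ 4 * frobNorm W ^ 6) := by
  have hx0 : 0 ≤ x ⬝ᵥ x := dotProduct_self_star_nonneg x
  have hxM : x ⬝ᵥ x ≤ M ^ 2 := euclNorm_sq x ▸ pow_le_pow_left₀ (Real.sqrt_nonneg _) hx 2
  have hinner := trace_transpose_mul_Gmat_outer_le x W
  have hG := frobNorm_Gmat_outer_sq_le x W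
  have h_two_le : (2 : ℝ) ≤ n + 3 := by linarith [n.cast_nonneg (α := ℝ)]
  rw [frobNorm_add_sq, frobNorm_smul_sq, Matrix.mul_smul, trace_smul, smul_eq_mul]
  calc frobNorm W ^ 2 + 2 * (η * (Wᵀ * Gmat (outer x) W).trace)
        + η ^ 2 * frobNorm (Gmat (outer x) W) ^ 2
      ≤ frobNorm W ^ 2 + 2 * (η * ((x ⬝ᵥ x) * frobNorm W ^ 2))
        + η ^ 2 * ((x ⬝ᵥ x) ^ 2 * (frobNorm W ^ 2 + 2 * frobNorm W ^ 6)) := by gcongr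
    _ ≤ frobNorm W ^ 2 + 2 * (η * (M ^ 2 * frobNorm W ^ 2))
        + η ^ 2 * ((M ^ 2) ^ 2 * (frobNorm W ^ 2 + 2 * frobNorm W ^ 6)) := by gcongr
    _ ≤ _ := by
        have h6 : 2 * (M ^ 4 * frobNorm W ^ 6) ≤ (n + 3) * (M ^ 4 * frobNorm W ^ 6) := by gcongr
        linarith [mul_le_mul_of_nonneg_left h6 (sq_nonneg η)]

theorem frobNorm_sq_step_le {n : ℕ} (hn : 1 ≤ n) (M η : ℝ) (hM : 0 < M) (hη : 0 < η)
    (x : Fin n → ℝ) (hx : euclNorm x ≤ M) (W : Matrix (Fin n) (Fin n) ℝ) :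
    frobNorm (W + η • Gmat (outer x) W) ^ 2 ≤
      (1 + 2 * M ^ 2 * η) * frobNorm W ^ 2 +
        η ^ 2 * (M ^ 4 * frobNorm W ^ 2 + ((n : ℝ) + 3) * M ^ 4 * frobNorm W ^ 6) :=
  frobNorm_sq_step_le_general M η hη x hx W
end

section
/- Let n ≥ 1, let Λ ∈ ℝ^{n×n} be symmetric, and let W ∈ ℝ^{n×n} be arbitrary. Then Σ(Λ,W) is skew-symmetric, i.e. Σ(Λ,W)ᵀ = −Σ(Λ,W), and the following matrix identity holds: W G(Λ,W)ᵀ + G(Λ,W) Wᵀ = WWᵀΛ + ΛWWᵀ − 2 WWᵀ Λ WWᵀ. -/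
open Matrix

theorem Matrix.isSymm_transpose_mul_mul {m k α : Type*} [Fintype m] [CommSemiring α]
    (Q : Matrix m k α) {Λ : Matrix m m α} (hΛ : Λ.IsSymm) : (Qᵀ * Λ * Q).IsSymm := by
  simp only [IsSymm, transpose_mul, transpose_transpose, hΛ.eq, Matrix.mul_assoc]

theorem sigmaMat_transpose {n : ℕ} {Λ Q : Matrix (Fin n) (Fin n) ℝ}
    (h : (Qᵀ * Λ * Q).IsSymm) : (sigmaMat Λ Q)ᵀ = -sigmaMat Λ Q := by
  ext j k
  simp only [transpose_apply, sigmaMat, of_apply, Fin.val_fin_lt, h.apply]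
  rcases lt_trichotomy j k with hjk | rfl | hjk
  · simp [hjk, hjk.not_gt]
  · simp
  · simp [hjk, hjk.not_gt]

/- The skew-symmetric correction `W S` contributes `W Sᵀ Wᵀ + W S Wᵀ = 0`. -/
theorem mul_transpose_add_mul_transpose_of_transpose_eq_neg {ι R : Type*} [Fintype ι]
    [CommRing R] {Λ W S : Matrix ι ι R} (hΛ : Λᵀ = Λ) (hS : Sᵀ = -S) :
    W * (Λ * W - W * Wᵀ * Λ * W + W * S)ᵀ + (Λ * W - W * Wᵀ * Λ * W + W * S) * Wᵀ =
      W * Wᵀ * Λ + Λ * (W * Wᵀ) - 2 • (W * Wᵀ * Λ * (W * Wᵀ)) := by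
  simp only [transpose_add, transpose_sub, transpose_mul, transpose_transpose, hΛ, hS,
    Matrix.neg_mul]
  noncomm_ring

theorem sigma_skew_and_riccati_identity_general {n : ℕ}
    (Λ W : Matrix (Fin n) (Fin n) ℝ) (hΛ : Λᵀ = Λ) :
    (sigmaMat Λ W)ᵀ = -sigmaMat Λ W ∧
    W * (Gmat Λ W)ᵀ + Gmat Λ W * Wᵀ =
      W * Wᵀ * Λ + Λ * (W * Wᵀ) - 2 • (W * Wᵀ * Λ * (W * Wᵀ)) := by
  have hskew := sigmaMat_transpose (W.isSymm_transpose_mul_mul hΛ)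
  exact ⟨hskew, mul_transpose_add_mul_transpose_of_transpose_eq_neg hΛ hskew⟩

/-- For symmetric `Λ`, `Σ(Λ,W)` is skew-symmetric and
`W G(Λ,W)ᵀ + G(Λ,W) Wᵀ = WWᵀΛ + ΛWWᵀ − 2 WWᵀΛWWᵀ`. -/
theorem sigma_skew_and_riccati_identity {n : ℕ} (hn : 1 ≤ n)
    (Λ W : Matrix (Fin n) (Fin n) ℝ) (hΛ : Λᵀ = Λ) :
    (sigmaMat Λ W)ᵀ = -sigmaMat Λ W ∧
    W * (Gmat Λ W)ᵀ + Gmat Λ W * Wᵀ =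
      W * Wᵀ * Λ + Λ * (W * Wᵀ) - 2 • (W * Wᵀ * Λ * (W * Wᵀ)) :=
  sigma_skew_and_riccati_identity_general Λ W hΛ
end

section
/- (First-order consistency of the SGA semigroup.) Let n ≥ 1, M > 0, let ν be a probability measure on ℝⁿ supported in { x : ‖x‖₂ ≤ M }, and set A := ∫ xxᵀ dν(x). Let ψ : ℝ^{n×n} → ℝ be a C² function with bounded derivatives up to order 2, and for η > 0 define Sψ(W) := ∫ ψ( W + η G(xxᵀ, W) ) dν(x). Then there exist η₀ > 0 and C > 0, depending only on n, M, and the C² norm of ψ, such that for all 0 < η ≤ η₀ and all W ∈ ℝ^{n×n} with WᵀW = I: | Sψ(W) − ψ(W) − η Σ_{i,j} G(A,W)_{ij} (∂ψ/∂w_{ij})(W) | ≤ C η². -/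
open Matrix

open MeasureTheory

attribute [local instance] Matrix.frobeniusNormedAddCommGroup Matrix.frobeniusNormedSpace

/-!
A second-order Taylor expansion of `ψ` at `W` with increment `η G(xxᵀ, W)` leaves a remainder
of size at most `K η² ‖G(xxᵀ, W)‖²`, where `K` bounds `D²ψ`. Averaging over `ν`, the linear term
becomes `η Dψ(W)[G(A, W)]` because `G` is linear in its first argument and `A` is the second
moment of `ν`. For orthogonal `W` we have `G(Λ, W) = W Σ(Λ, W)`, and the Frobenius norm is
invariant under orthogonal factors, so `‖G(xxᵀ, W)‖ ≤ ‖xxᵀ‖ ≤ M²` on the support of `ν`;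
hence `C = K M⁴ + 1`.
-/

section Taylor

variable {E F : Type*} [NormedAddCommGroup E] [NormedSpace ℝ E] [NormedAddCommGroup F]
  [NormedSpace ℝ F]

theorem norm_fderiv_sub_fderiv_le_of_norm_iteratedFDeriv_two_le {f : E → F} (hf : ContDiff ℝ 2 f)
    {K : ℝ} (hK : ∀ y, ‖iteratedFDeriv ℝ 2 f y‖ ≤ K) (a b : E) :
    ‖fderiv ℝ f a - fderiv ℝ f b‖ ≤ K * ‖a - b‖ := by
  have hdiff : Differentiable ℝ (fderiv ℝ f) :=
    (hf.fderiv_right (m := 1) le_rfl).differentiable one_ne_zero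
  refine convex_univ.norm_image_sub_le_of_norm_fderiv_le (fun x _ => hdiff x) (fun x _ => ?_)
    (Set.mem_univ b) (Set.mem_univ a)
  rw [← norm_iteratedFDeriv_one, norm_iteratedFDeriv_fderiv]
  exact hK x

theorem norm_sub_sub_fderiv_le_of_norm_iteratedFDeriv_two_le {f : E → F} (hf : ContDiff ℝ 2 f)
    {K : ℝ} (hK : ∀ y, ‖iteratedFDeriv ℝ 2 f y‖ ≤ K) (w h : E) :
    ‖f (w + h) - f w - fderiv ℝ f w h‖ ≤ K * ‖h‖ ^ 2 := by
  have hbound : ∀ z ∈ Metric.closedBall w ‖h‖, ‖fderiv ℝ f z - fderiv ℝ f w‖ ≤ K * ‖h‖ :=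
    fun z hz => calc
      ‖fderiv ℝ f z - fderiv ℝ f w‖ ≤ K * ‖z - w‖ :=
        norm_fderiv_sub_fderiv_le_of_norm_iteratedFDeriv_two_le hf hK z w
      _ ≤ K * ‖h‖ := by
        gcongr
        · exact (norm_nonneg _).trans (hK w)
        · exact mem_closedBall_iff_norm.1 hz
  have := (convex_closedBall w ‖h‖).norm_image_sub_le_of_norm_fderiv_le'
    (fun z _ => (hf.differentiable two_ne_zero) z) hbound
    (Metric.mem_closedBall_self (norm_nonneg h)) (y := w + h) (by simp)
  simpa [sq, mul_assoc] using this

end Taylor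

theorem norm_integral_sub_sub_integral_fderiv_le {X E F : Type*} [MeasurableSpace X]
    {ν : Measure X} [IsProbabilityMeasure ν] [NormedAddCommGroup E] [NormedSpace ℝ E]
    [ProperSpace E] [NormedAddCommGroup F] [NormedSpace ℝ F] [CompleteSpace F] {f : E → F}
    (hf : ContDiff ℝ 2 f) {K : ℝ} (hK : ∀ y, ‖iteratedFDeriv ℝ 2 f y‖ ≤ K) (w : E) {g : X → E}
    (hg : AEStronglyMeasurable g ν) {B : ℝ} (hgB : ∀ᵐ x ∂ν, ‖g x‖ ≤ B) :
    ‖∫ x, f (w + g x) ∂ν - f w - ∫ x, fderiv ℝ f w (g x) ∂ν‖ ≤ K * B ^ 2 := by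
  obtain ⟨C, hC⟩ :=
    (isCompact_closedBall w B).exists_bound_of_continuousOn hf.continuous.continuousOn
  have hf_int : Integrable (fun x => f (w + g x)) ν := by
    refine .of_bound (hf.continuous.comp_aestronglyMeasurable (hg.const_add w)) C ?_
    filter_upwards [hgB] with x hx
    exact hC _ (mem_closedBall_iff_norm.2 (by simpa using hx))
  have hL_int : Integrable (fun x => fderiv ℝ f w (g x)) ν :=
    (fderiv ℝ f w).integrable_comp (.of_bound hg B hgB)
  calc ‖∫ x, f (w + g x) ∂ν - f w - ∫ x, fderiv ℝ f w (g x) ∂ν‖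
      = ‖∫ x, (f (w + g x) - f w - fderiv ℝ f w (g x)) ∂ν‖ := by
        have hf_int' : Integrable (fun x => f (w + g x) - f w) ν :=
          hf_int.sub (integrable_const _)
        rw [integral_sub hf_int' hL_int, integral_sub hf_int (integrable_const _), integral_const,
          probReal_univ, one_smul]
    _ ≤ K * B ^ 2 * ν.real Set.univ := by
        refine norm_integral_le_of_norm_le_const ?_
        filter_upwards [hgB] with x hx
        refine (norm_sub_sub_fderiv_le_of_norm_iteratedFDeriv_two_le hf hK w (g x)).trans ?_
        gcongr
        exact (norm_nonneg _).trans (hK w)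
    _ = K * B ^ 2 := by rw [probReal_univ, mul_one]

section Frobenius

variable {m n : Type*} [Fintype m] [Fintype n]

theorem frobenius_norm_sq_eq_trace (A : Matrix m n ℝ) : ‖A‖ ^ 2 = trace (Aᵀ * A) := by
  rw [frobenius_norm_def, ← Real.rpow_natCast, ← Real.rpow_mul (by positivity)]
  simp [trace, mul_apply, Finset.sum_comm (γ := m), sq]

theorem frobenius_norm_mul_of_transpose_mul_self_eq_one [DecidableEq n] {W : Matrix n n ℝ}
    (hW : Wᵀ * W = 1) (X : Matrix n m ℝ) : ‖W * X‖ = ‖X‖ := by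
  rw [← sq_eq_sq₀ (norm_nonneg _) (norm_nonneg _), frobenius_norm_sq_eq_trace,
    frobenius_norm_sq_eq_trace, transpose_mul, Matrix.mul_assoc, ← Matrix.mul_assoc Wᵀ, hW,
    Matrix.one_mul]

theorem frobenius_norm_mul_of_mul_transpose_self_eq_one [DecidableEq n] {W : Matrix n n ℝ}
    (hW : W * Wᵀ = 1) (X : Matrix m n ℝ) : ‖X * W‖ = ‖X‖ := by
  rw [← frobenius_norm_transpose, transpose_mul,
    frobenius_norm_mul_of_transpose_mul_self_eq_one (by rwa [transpose_transpose]),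
    frobenius_norm_transpose]

end Frobenius

section Gmat

variable {n : ℕ}

theorem sigmaMat_add (Λ₁ Λ₂ Q : Matrix (Fin n) (Fin n) ℝ) :
    sigmaMat (Λ₁ + Λ₂) Q = sigmaMat Λ₁ Q + sigmaMat Λ₂ Q := by
  ext j k
  simp only [sigmaMat, Matrix.mul_add, Matrix.add_mul, Matrix.add_apply, of_apply]
  split_ifs <;> ring

theorem sigmaMat_smul (c : ℝ) (Λ Q : Matrix (Fin n) (Fin n) ℝ) :
    sigmaMat (c • Λ) Q = c • sigmaMat Λ Q := by
  ext j k
  simp only [sigmaMat, Matrix.mul_smul, Matrix.smul_mul, Matrix.smul_apply, of_apply,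
    smul_eq_mul]
  split_ifs <;> ring

noncomputable def gmatLinearMap (W : Matrix (Fin n) (Fin n) ℝ) :
    Matrix (Fin n) (Fin n) ℝ →ₗ[ℝ] Matrix (Fin n) (Fin n) ℝ where
  toFun Λ := Gmat Λ W
  map_add' Λ₁ Λ₂ := by
    simp only [Gmat, sigmaMat_add, Matrix.add_mul, Matrix.mul_add]
    abel
  map_smul' c Λ := by
    simp only [Gmat, sigmaMat_smul, Matrix.smul_mul, Matrix.mul_smul, RingHom.id_apply,
      smul_sub, smul_add]

@[simp]
theorem gmatLinearMap_apply (W Λ : Matrix (Fin n) (Fin n) ℝ) : gmatLinearMap W Λ = Gmat Λ W :=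
  rfl

theorem norm_sigmaMat_le (Λ Q : Matrix (Fin n) (Fin n) ℝ) : ‖sigmaMat Λ Q‖ ≤ ‖Qᵀ * Λ * Q‖ := by
  rw [frobenius_norm_def, frobenius_norm_def]
  gcongr with j _ k _
  simp only [sigmaMat, of_apply]
  split_ifs <;> simp

theorem gmat_eq_mul_sigmaMat {Λ W : Matrix (Fin n) (Fin n) ℝ} (hW : W * Wᵀ = 1) :
    Gmat Λ W = W * sigmaMat Λ W := by
  simp [Gmat, hW]

theorem norm_gmat_le {W : Matrix (Fin n) (Fin n) ℝ} (hW : Wᵀ * W = 1)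
    (Λ : Matrix (Fin n) (Fin n) ℝ) : ‖Gmat Λ W‖ ≤ ‖Λ‖ := by
  have hW' : W * Wᵀ = 1 := mul_eq_one_comm.1 hW
  calc ‖Gmat Λ W‖ = ‖sigmaMat Λ W‖ := by
        rw [gmat_eq_mul_sigmaMat hW', frobenius_norm_mul_of_transpose_mul_self_eq_one hW]
    _ ≤ ‖Wᵀ * Λ * W‖ := norm_sigmaMat_le Λ W
    _ = ‖Λ‖ := by
        rw [frobenius_norm_mul_of_mul_transpose_self_eq_one hW',
          frobenius_norm_mul_of_transpose_mul_self_eq_one (by rwa [transpose_transpose])]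

end Gmat

section Moments

variable {n : ℕ}

theorem euclNorm_eq_norm_toLp (x : Fin n → ℝ) : euclNorm x = ‖WithLp.toLp 2 x‖ := by
  simp [euclNorm, EuclideanSpace.norm_eq]

theorem continuous_euclNorm : Continuous (euclNorm : (Fin n → ℝ) → ℝ) := by
  unfold euclNorm
  fun_prop

theorem abs_le_euclNorm (x : Fin n → ℝ) (i : Fin n) : |x i| ≤ euclNorm x := by
  simpa [euclNorm_eq_norm_toLp] using PiLp.norm_apply_le (WithLp.toLp 2 x) i

theorem continuous_outer : Continuous (outer : (Fin n → ℝ) → Matrix (Fin n) (Fin n) ℝ) :=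
  continuous_pi fun i => continuous_pi fun j => (continuous_apply i).mul (continuous_apply j)

theorem outer_eq_replicateCol_mul_replicateRow (x : Fin n → ℝ) :
    outer x = replicateCol (Fin 1) x * replicateRow (Fin 1) x := by
  ext i j
  simp [outer, mul_apply]

theorem norm_outer_le (x : Fin n → ℝ) : ‖outer x‖ ≤ euclNorm x ^ 2 := by
  rw [outer_eq_replicateCol_mul_replicateRow, euclNorm_eq_norm_toLp, sq]
  exact (frobenius_norm_mul _ _).trans_eq
    (congr_arg₂ _ (frobenius_norm_replicateCol x) (frobenius_norm_replicateRow x))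

theorem ae_euclNorm_le_of_measure_eq_one {ν : Measure (Fin n → ℝ)} [IsProbabilityMeasure ν]
    {M : ℝ} (h : ν {x | euclNorm x ≤ M} = 1) : ∀ᵐ x ∂ν, euclNorm x ≤ M :=
  (ae_iff_measure_eq (measurableSet_le continuous_euclNorm.measurable
    measurable_const).nullMeasurableSet).2 (by rw [h, measure_univ])

theorem integrable_mul_of_ae_euclNorm_le {ν : Measure (Fin n → ℝ)} [IsFiniteMeasure ν] {M : ℝ}
    (h : ∀ᵐ x ∂ν, euclNorm x ≤ M) (i j : Fin n) : Integrable (fun x => x i * x j) ν := by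
  refine .of_bound (by fun_prop) (M * M) ?_
  filter_upwards [h] with x hx
  rw [norm_mul]
  exact mul_le_mul ((abs_le_euclNorm x i).trans hx) ((abs_le_euclNorm x j).trans hx)
    (norm_nonneg _) ((abs_nonneg _).trans ((abs_le_euclNorm x i).trans hx))

theorem linearMap_apply_eq_sum_single {R N m k : Type*} [CommSemiring R] [AddCommMonoid N]
    [Module R N] [Fintype m] [Fintype k] [DecidableEq m] [DecidableEq k]
    (φ : Matrix m k R →ₗ[R] N) (Λ : Matrix m k R) :
    φ Λ = ∑ i, ∑ j, Λ i j • φ (Matrix.single i j 1) := by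
  conv_lhs => rw [matrix_eq_sum_single Λ]
  simp only [map_sum, ← LinearMap.map_smul, smul_single, smul_eq_mul, mul_one]

theorem integral_linearMap_outer {ν : Measure (Fin n → ℝ)}
    (h : ∀ i j, Integrable (fun x => x i * x j) ν) (φ : Matrix (Fin n) (Fin n) ℝ →ₗ[ℝ] ℝ) :
    ∫ x, φ (outer x) ∂ν = φ (of fun i j => ∫ x, x i * x j ∂ν) := by
  have hexp (Λ : Matrix (Fin n) (Fin n) ℝ) := linearMap_apply_eq_sum_single φ Λ
  simp only [outer, hexp (of _), of_apply, smul_eq_mul]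
  rw [integral_finsetSum _ fun i _ => integrable_finsetSum _ fun j _ => (h i j).mul_const _]
  refine Finset.sum_congr rfl fun i _ => ?_
  rw [integral_finsetSum _ fun j _ => (h i j).mul_const _]
  simp [integral_mul_const]

theorem continuous_gmat_outer (W : Matrix (Fin n) (Fin n) ℝ) :
    Continuous fun x : Fin n → ℝ => Gmat (outer x) W :=
  (gmatLinearMap W).continuous_of_finiteDimensional.comp continuous_outer

theorem integral_gmat_outer {ν : Measure (Fin n → ℝ)}
    (h : ∀ i j, Integrable (fun x => x i * x j) ν) {A : Matrix (Fin n) (Fin n) ℝ}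
    (hA : ∀ i j, A i j = ∫ x, x i * x j ∂ν) (W : Matrix (Fin n) (Fin n) ℝ)
    (L : Matrix (Fin n) (Fin n) ℝ →L[ℝ] ℝ) :
    ∫ x, L (Gmat (outer x) W) ∂ν = ∑ i, ∑ j, Gmat A W i j * L (Matrix.single i j 1) := by
  have hA' : (of fun i j => ∫ x, x i * x j ∂ν) = A := Matrix.ext fun i j => (hA i j).symm
  simpa [hA'] using (integral_linearMap_outer h (L.toLinearMap ∘ₗ gmatLinearMap W)).trans
    (linearMap_apply_eq_sum_single L.toLinearMap _)

end Moments

theorem sga_first_order_consistency_general {n : ℕ} (M : ℝ)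
    (ν : Measure (Fin n → ℝ)) [IsProbabilityMeasure ν]
    (hsupp : ν {x | euclNorm x ≤ M} = 1)
    (A : Matrix (Fin n) (Fin n) ℝ) (hA : ∀ i j, A i j = ∫ x, x i * x j ∂ν)
    (ψ : Matrix (Fin n) (Fin n) ℝ → ℝ) (hψ : ContDiff ℝ 2 ψ)
    (hbdd : ∃ K : ℝ, ∀ W : Matrix (Fin n) (Fin n) ℝ, ∀ i : ℕ, i ≤ 2 →
      ‖iteratedFDeriv ℝ i ψ W‖ ≤ K) :
    ∃ η₀ > 0, ∃ C > 0, ∀ η : ℝ, 0 < η → η ≤ η₀ →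
      ∀ W : Matrix (Fin n) (Fin n) ℝ, Wᵀ * W = 1 →
        |(∫ x, ψ (W + η • Gmat (outer x) W) ∂ν) - ψ W -
            η * ∑ i, ∑ j, Gmat A W i j * fderiv ℝ ψ W (Matrix.single i j 1)| ≤
          C * η ^ 2 := by
  obtain ⟨K, hK⟩ := hbdd
  have hK0 : 0 ≤ K := (norm_nonneg _).trans (hK 0 0 zero_le_two)
  have hae := ae_euclNorm_le_of_measure_eq_one hsupp
  refine ⟨1, one_pos, K * M ^ 4 + 1, by positivity, fun η hη _ W hW => ?_⟩
  have hlin : ∫ x, fderiv ℝ ψ W (η • Gmat (outer x) W) ∂ν =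
      η * ∑ i, ∑ j, Gmat A W i j * fderiv ℝ ψ W (Matrix.single i j 1) := by
    simp_rw [map_smul, smul_eq_mul, integral_const_mul,
      integral_gmat_outer (integrable_mul_of_ae_euclNorm_le hae) hA]
  have hsmall : ∀ᵐ x ∂ν, ‖η • Gmat (outer x) W‖ ≤ η * M ^ 2 := by
    filter_upwards [hae] with x hx
    rw [norm_smul, Real.norm_of_nonneg hη.le]
    gcongr
    exact (norm_gmat_le hW _).trans ((norm_outer_le x).trans
      (pow_le_pow_left₀ (Real.sqrt_nonneg _) hx 2))
  -- `by exact` postpones the continuity proof until the Frobenius topology is known, so that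
  -- `PseudoMetrizableSpace` is not sought for the bare product topology on matrices.
  have key := norm_integral_sub_sub_integral_fderiv_le hψ (fun y => hK y 2 le_rfl) W
    (Continuous.aestronglyMeasurable
      (by exact (continuous_const (y := η)).smul (continuous_gmat_outer W)))
    hsmall
  rw [← hlin, ← Real.norm_eq_abs]
  calc _ ≤ K * (η * M ^ 2) ^ 2 := key
    _ ≤ (K * M ^ 4 + 1) * η ^ 2 := by nlinarith [sq_nonneg η]

/-- First-order consistency of the SGA semigroup: for `C²` test functions `ψ` with bounded
derivatives up to order 2, `|Sψ(W) − ψ(W) − η Σ_{ij} G(A,W)_{ij} ∂ψ/∂w_{ij}(W)| ≤ Cη²`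
uniformly over orthogonal `W` and `0 < η ≤ η₀`. -/
theorem sga_first_order_consistency {n : ℕ} (hn : 1 ≤ n) (M : ℝ) (hM : 0 < M)
    (ν : Measure (Fin n → ℝ)) [IsProbabilityMeasure ν]
    (hsupp : ν {x | euclNorm x ≤ M} = 1)
    (A : Matrix (Fin n) (Fin n) ℝ) (hA : ∀ i j, A i j = ∫ x, x i * x j ∂ν)
    (ψ : Matrix (Fin n) (Fin n) ℝ → ℝ) (hψ : ContDiff ℝ 2 ψ)
    (hbdd : ∃ K : ℝ, ∀ W : Matrix (Fin n) (Fin n) ℝ, ∀ i : ℕ, i ≤ 2 →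
      ‖iteratedFDeriv ℝ i ψ W‖ ≤ K) :
    ∃ η₀ > 0, ∃ C > 0, ∀ η : ℝ, 0 < η → η ≤ η₀ →
      ∀ W : Matrix (Fin n) (Fin n) ℝ, Wᵀ * W = 1 →
        |(∫ x, ψ (W + η • Gmat (outer x) W) ∂ν) - ψ W -
            η * ∑ i, ∑ j, Gmat A W i j * fderiv ℝ ψ W (Matrix.single i j 1)| ≤
          C * η ^ 2 :=
  sga_first_order_consistency_general M ν hsupp A hA ψ hψ hbdd
end

section
/- (Explicit invariant measure for the uniform-distribution example.) Let η > 0. Then for every x ∈ [0, 2π): exp( (1/η) ∫₀^x ( −45 cos s sin s + 16η ( cos³ s sin s − sin³ s cos s ) ) / ( 10 − 16 cos² s sin² s ) ds ) = exp( −(15√6/(16η)) arctan( 2√6 sin² x / ( 5 − 4 sin² x ) ) ) · √( 5 / ( 8 sin⁴ x − 8 sin² x + 5 ) ). -/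
/-!
Substituting `u = sin² s` turns the integrand into `Φ'(u) du` for an explicit rational-plus-arctan
antiderivative `Φ`: the denominator becomes `10 - 16 cos² s sin² s = 2 (8u² - 8u + 5)`, a quadratic
with negative discriminant, and `(2√6 u / (5 - 4u))' = 10√6 / (5 - 4u)²` makes its arctan term
have derivative `2√6 / (8u² - 8u + 5)`. Since `Φ(0) = 0`, the integral is `Φ(sin² x)`, and
exponentiating `Φ / η` gives the closed form.
-/

open Real

/-- `η · log ρ_∞` for the invariant density `ρ_∞`, written in the variable `u = sin² x`. -/
noncomputable def invariantPotential (η u : ℝ) : ℝ :=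
  -(15 * √6 / 16) * arctan (2 * √6 * u / (5 - 4 * u)) + η / 2 * log (5 / (8 * u ^ 2 - 8 * u + 5))

lemma quadratic_pos (u : ℝ) : 0 < 8 * u ^ 2 - 8 * u + 5 := by
  nlinarith [sq_nonneg (2 * u - 1)]

lemma hasDerivAt_arctan_potential_term {u : ℝ} (hu : 5 - 4 * u ≠ 0) :
    HasDerivAt (fun v => arctan (2 * √6 * v / (5 - 4 * v)))
      (2 * √6 / (8 * u ^ 2 - 8 * u + 5)) u := by
  have h6 : √6 ^ 2 = 6 := sq_sqrt (by norm_num)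
  have hfrac : HasDerivAt (fun v => 2 * √6 * v / (5 - 4 * v)) (10 * √6 / (5 - 4 * u) ^ 2) u := by
    refine (((hasDerivAt_id' u).const_mul _).fun_div
      (((hasDerivAt_id' u).const_mul 4).const_sub 5) hu).congr_deriv ?_
    ring
  have hone : 1 + (2 * √6 * u / (5 - 4 * u)) ^ 2
      = 5 * (8 * u ^ 2 - 8 * u + 5) / (5 - 4 * u) ^ 2 := by
    rw [div_pow, one_add_div (pow_ne_zero 2 hu)]
    linear_combination (4 * u ^ 2 / (5 - 4 * u) ^ 2) * h6
  refine hfrac.arctan.congr_deriv ?_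
  have hq := (quadratic_pos u).ne'
  rw [hone, one_div_div, div_mul_div_comm, div_eq_div_iff (by positivity) hq]
  ring

lemma hasDerivAt_log_potential_term (u : ℝ) :
    HasDerivAt (fun v => log (5 / (8 * v ^ 2 - 8 * v + 5)))
      ((8 - 16 * u) / (8 * u ^ 2 - 8 * u + 5)) u := by
  have hq := quadratic_pos u
  have hQ : HasDerivAt (fun v => 8 * v ^ 2 - 8 * v + 5) (16 * u - 8) u := by
    refine ((((hasDerivAt_pow 2 u).const_mul 8).sub
      ((hasDerivAt_id' u).const_mul 8)).add_const 5).congr_deriv ?_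
    push_cast
    ring
  refine (((hasDerivAt_const u (5 : ℝ)).fun_div hQ hq.ne').log
    (div_pos (by norm_num) hq).ne').congr_deriv ?_
  field_simp
  ring

lemma hasDerivAt_invariantPotential (η : ℝ) {u : ℝ} (hu : 5 - 4 * u ≠ 0) :
    HasDerivAt (invariantPotential η)
      ((-45 + 16 * η * (1 - 2 * u)) / (4 * (8 * u ^ 2 - 8 * u + 5))) u := by
  have h6 : √6 ^ 2 = 6 := sq_sqrt (by norm_num)
  refine (((hasDerivAt_arctan_potential_term hu).const_mul _).add
    ((hasDerivAt_log_potential_term u).const_mul _)).congr_deriv ?_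
  field_simp
  rw [h6]
  ring

lemma ten_sub_sixteen_cos_sq_mul_sin_sq (s : ℝ) :
    10 - 16 * cos s ^ 2 * sin s ^ 2 = 2 * (8 * (sin s ^ 2) ^ 2 - 8 * sin s ^ 2 + 5) := by
  rw [cos_sq']
  ring

lemma hasDerivAt_invariantPotential_sin_sq (η x : ℝ) :
    HasDerivAt (fun s => invariantPotential η (sin s ^ 2))
      ((-45 * cos x * sin x + 16 * η * (cos x ^ 3 * sin x - sin x ^ 3 * cos x))
        / (10 - 16 * cos x ^ 2 * sin x ^ 2)) x := by
  have hu : 5 - 4 * sin x ^ 2 ≠ 0 := by nlinarith [sin_sq_le_one x]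
  refine ((hasDerivAt_invariantPotential η hu).comp x ((hasDerivAt_sin x).pow 2)).congr_deriv ?_
  rw [ten_sub_sixteen_cos_sq_mul_sin_sq, pow_succ (cos x), cos_sq']
  field_simp
  ring

/-- The integrand is `2f/g²` for the drift `f` and diffusion coefficient `g` of the angle process. -/
lemma integral_two_drift_div_diffusion_sq (η x : ℝ) :
    ∫ s in (0 : ℝ)..x, (-45 * cos s * sin s + 16 * η * (cos s ^ 3 * sin s - sin s ^ 3 * cos s))
        / (10 - 16 * cos s ^ 2 * sin s ^ 2) = invariantPotential η (sin x ^ 2) := by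
  have hcont : Continuous fun s => (-45 * cos s * sin s
      + 16 * η * (cos s ^ 3 * sin s - sin s ^ 3 * cos s)) / (10 - 16 * cos s ^ 2 * sin s ^ 2) := by
    refine Continuous.div (by fun_prop) (by fun_prop) fun s => ?_
    rw [ten_sub_sixteen_cos_sq_mul_sin_sq]
    exact (mul_pos two_pos (quadratic_pos _)).ne'
  rw [intervalIntegral.integral_eq_sub_of_hasDerivAt
    (fun s _ => hasDerivAt_invariantPotential_sin_sq η s) (hcont.intervalIntegrable _ _)]
  simp [invariantPotential]

/-- Explicit invariant measure for the uniform-distribution example: closed-form evaluation of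
`exp((1/η)∫₀ˣ (−45 cos s sin s + 16η(cos³s sin s − sin³s cos s))/(10 − 16cos²s sin²s) ds)`. -/
theorem explicit_invariant_measure_example (η : ℝ) (hη : 0 < η) :
    ∀ x : ℝ, 0 ≤ x → x < 2 * π →
      Real.exp ((1 / η) * ∫ s in (0 : ℝ)..x,
          (-45 * Real.cos s * Real.sin s
              + 16 * η * ((Real.cos s) ^ 3 * Real.sin s - (Real.sin s) ^ 3 * Real.cos s))
            / (10 - 16 * (Real.cos s) ^ 2 * (Real.sin s) ^ 2)) =
      Real.exp (-(15 * Real.sqrt 6 / (16 * η)) *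
            Real.arctan (2 * Real.sqrt 6 * (Real.sin x) ^ 2 / (5 - 4 * (Real.sin x) ^ 2))) *
        Real.sqrt (5 / (8 * (Real.sin x) ^ 4 - 8 * (Real.sin x) ^ 2 + 5)) := by
  intro x _ _
  have hq : 0 < 5 / (8 * sin x ^ 4 - 8 * sin x ^ 2 + 5) := by
    rw [show sin x ^ 4 = (sin x ^ 2) ^ 2 by ring]
    exact div_pos (by norm_num) (quadratic_pos _)
  rw [integral_two_drift_div_diffusion_sq, invariantPotential, ← pow_mul,
    show 2 * 2 = 4 from rfl, mul_add, exp_add, ← exp_log (sqrt_pos.2 hq), log_sqrt hq.le]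
  congr 2 <;> field_simp
end
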